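/- arXiv:2103.02070 — 3 statements merged into one kernel-verified Lean document; each statement's English description precedes it below -/
import Mathlib

section
/- Let V_1, ..., V_n be isometries on a Hilbert space H with pairwise orthogonal ranges, i.e., Σ_{k=1}^n V_k V_k* ≤ I. Then the subspace ⋂_{k=1}^n ker V_k* is wandering for the family: for distinct words μ, ν in the free monoid on n letters, V_μ (⋂_k ker V_k*) ⟂ V_ν (⋂_k ker V_k*), where V_μ = V_{μ_1}···V_{μ_m}. -/
/-!
Since `V_i* V_j = δ_ij`, we have `⟪V_i u, V_j w⟫ = δ_ij ⟪u, w⟫`: stripping common leading letters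
from `μ` and `ν` either meets two different letters, giving `0`, or leaves one word empty, and then
the inner product is `⟪x, V_j w⟫ = ⟪V_j* x, w⟫ = 0` (or its mirror image).
-/

open ContinuousLinearMap

open scoped InnerProductSpace

section

variable {𝕜 H ι : Type*} [RCLike 𝕜] [NormedAddCommGroup H] [InnerProductSpace 𝕜 H] [CompleteSpace H]

theorem inner_apply_apply_eq_inner_adjoint_comp (S T : H →L[𝕜] H) (u v : H) :
    ⟪S u, T v⟫_𝕜 = ⟪u, (adjoint S ∘L T) v⟫_𝕜 := by
  rw [comp_apply, adjoint_inner_right]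

theorem inner_apply_eq_zero_of_adjoint_apply_eq_zero {T : H →L[𝕜] H} {x : H}
    (hx : adjoint T x = 0) (z : H) : ⟪x, T z⟫_𝕜 = 0 := by
  rw [← adjoint_inner_left, hx, inner_zero_left]

variable (V : ι → H →L[𝕜] H)

theorem inner_listProd_map_cons_eq_zero {x : H} (hx : ∀ k, adjoint (V k) x = 0)
    (j : ι) (ν : List ι) (y : H) : ⟪x, ((j :: ν).map V).prod y⟫_𝕜 = 0 := by
  rw [List.map_cons, List.prod_cons, mul_apply_eq_comp]
  exact inner_apply_eq_zero_of_adjoint_apply_eq_zero (hx j) _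

theorem inner_listProd_map_eq_zero_of_ne (hiso : ∀ i, adjoint (V i) ∘L V i = 1)
    (horth : ∀ i j, i ≠ j → adjoint (V i) ∘L V j = 0) {x y : H}
    (hx : ∀ k, adjoint (V k) x = 0) (hy : ∀ k, adjoint (V k) y = 0) :
    ∀ {μ ν : List ι}, μ ≠ ν → ⟪(μ.map V).prod x, (ν.map V).prod y⟫_𝕜 = 0
  | [], [], hne => absurd rfl hne
  | [], j :: ν, _ => inner_listProd_map_cons_eq_zero V hx j ν y
  | i :: μ, [], _ => by
    rw [inner_eq_zero_symm]
    exact inner_listProd_map_cons_eq_zero V hy i μ x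
  | i :: μ, j :: ν, hne => by
    rw [List.map_cons, List.map_cons, List.prod_cons, List.prod_cons, mul_apply_eq_comp, mul_apply_eq_comp,
      inner_apply_apply_eq_inner_adjoint_comp]
    obtain rfl | hij := eq_or_ne i j
    · rw [hiso, one_apply_eq_self]
      exact inner_listProd_map_eq_zero_of_ne hiso horth hx hy fun h => hne (h ▸ rfl)
    · rw [horth i j hij, zero_apply, inner_zero_right]

end

/-- For a row isometry `V_1, …, V_n` (isometries with pairwise orthogonal ranges),
the joint kernel `⋂_k ker V_k*` is a wandering subspace: for distinct words `μ ≠ ν`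
in the free monoid, `V_μ (⋂ ker V_k*) ⟂ V_ν (⋂ ker V_k*)`. -/
theorem stmt_4 {H : Type*} [NormedAddCommGroup H] [InnerProductSpace ℂ H] [CompleteSpace H]
    (n : ℕ) (V : Fin n → H →L[ℂ] H)
    (hiso : ∀ i, adjoint (V i) ∘L V i = 1)
    (horth : ∀ i j, i ≠ j → adjoint (V i) ∘L V j = 0) :
    ∀ μ ν : List (Fin n), μ ≠ ν →
      ∀ x ∈ ⨅ k, LinearMap.ker ((adjoint (V k) : H →L[ℂ] H) : H →ₗ[ℂ] H), ∀ y ∈ ⨅ k, LinearMap.ker ((adjoint (V k) : H →L[ℂ] H) : H →ₗ[ℂ] H),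
        (inner ℂ ((μ.map V).prod x) ((ν.map V).prod y) : ℂ) = 0 := by
  intro μ ν hne x hx y hy
  simp only [Submodule.mem_iInf, LinearMap.mem_ker, coe_coe] at hx hy
  exact inner_listProd_map_eq_zero_of_ne V hiso horth hx hy hne
end

section
/- Let W, V_1, ..., V_n be isometries on a Hilbert space H satisfying W V_k = V_{k+1} for 1 ≤ k ≤ n−1 and W V_n = V_1 W, with the V_k having pairwise orthogonal ranges. If the family {V_2, ..., V_n, V_1 W} is a row unitary, i.e., V_1 W W* V_1* + Σ_{i=2}^n V_i V_i* = I, then W is unitary and Σ_{i=1}^n V_i V_i* = I. -/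
/-!
Let `S = ∑ i, V i V i*`. Conjugating by `W` shifts the ranges along the odometer relations:
`W S W* = ∑ i, (W V i)(W V i)* = ∑_{i ≥ 2} V i V i* + (V 1 W)(V 1 W)*`, which is `1` by the
row-unitary hypothesis. Since `W* W = 1`, this gives `S = W* (W S W*) W = W* W = 1`, and then
`W W* = W S W* = 1`. The argument is pure algebra in a ring with involution.
-/

open ContinuousLinearMap

theorem eq_one_of_mul_mul_eq_one {M : Type*} [Monoid M] {u w s : M} (hu : u * w = 1)
    (hs : w * s * u = 1) : s = 1 :=
  calc s = u * w * s * (u * w) := by rw [hu, one_mul, mul_one]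
    _ = u * (w * s * u) * w := by simp only [mul_assoc]
    _ = 1 := by rw [hs, mul_one, hu]

section StarSemiring

variable {R : Type*} [Semiring R] [StarMul R]

theorem mul_sum_mul_star_mul_star {ι : Type*} (s : Finset ι) (w : R) (v : ι → R) :
    w * (∑ i ∈ s, v i * star (v i)) * star w = ∑ i ∈ s, w * v i * star (w * v i) := by
  simp only [Finset.mul_sum, Finset.sum_mul, star_mul, mul_assoc]

theorem odometer_mul_star_eq_one_and_sum_eq_one {m : ℕ} (w : R) (v : Fin (m + 1) → R)
    (hw : star w * w = 1) (hwv : ∀ i : Fin m, w * v i.castSucc = v i.succ)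
    (hwv_last : w * v (Fin.last m) = v 0 * w)
    (hrow : v 0 * w * star (v 0 * w) + ∑ i : Fin m, v i.succ * star (v i.succ) = 1) :
    w * star w = 1 ∧ ∑ i, v i * star (v i) = 1 := by
  have hconj : w * (∑ i, v i * star (v i)) * star w = 1 := by
    rw [mul_sum_mul_star_mul_star, Fin.sum_univ_castSucc, hwv_last, ← hrow, add_comm]
    simp only [hwv]
  have hsum := eq_one_of_mul_mul_eq_one hw hconj
  rw [hsum, mul_one] at hconj
  exact ⟨hconj, hsum⟩

end StarSemiring

-- `V ⟨k, _⟩` is the paper's `V_{k+1}`.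
/-- For an isometric representation `{W, V_1, …, V_n}` of the odometer semigroup `O_n`
(indexed here by `Fin n`, with `V ⟨k⟩` playing the role of `V_{k+1}`):
if the family `{V_2, …, V_n, V_1 W}` is a row unitary, then `W` is unitary and
`{V_1, …, V_n}` is a row unitary. -/
theorem stmt_5 {H : Type*} [NormedAddCommGroup H] [InnerProductSpace ℂ H] [CompleteSpace H]
    (n : ℕ) (hn : 0 < n) (W : H →L[ℂ] H) (V : Fin n → H →L[ℂ] H)
    (hWiso : adjoint W ∘L W = 1)
    (hWV : ∀ i : Fin n, ∀ h : (i : ℕ) + 1 < n, W ∘L V i = V ⟨(i : ℕ) + 1, h⟩)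
    (hWVn : W ∘L V ⟨n - 1, by omega⟩ = V ⟨0, hn⟩ ∘L W)
    (hrow : (V ⟨0, hn⟩ ∘L W) ∘L adjoint (V ⟨0, hn⟩ ∘L W) +
        ∑ i ∈ Finset.univ.erase (⟨0, hn⟩ : Fin n), V i ∘L adjoint (V i) = 1) :
    W ∘L adjoint W = 1 ∧ ∑ i : Fin n, V i ∘L adjoint (V i) = 1 := by
  obtain ⟨m, rfl⟩ : ∃ m, n = m + 1 := ⟨n - 1, by omega⟩
  have hrow_succ : (V 0 ∘L W) ∘L adjoint (V 0 ∘L W) +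
      ∑ i : Fin m, V i.succ ∘L adjoint (V i.succ) = 1 := by
    rw [← Fin.sum_Ioi_zero (fun i => V i ∘L adjoint (V i)), ← Finset.Ici_erase]
    simpa using hrow
  exact odometer_mul_star_eq_one_and_sum_eq_one W V hWiso
    (fun i => hWV i.castSucc (by simp)) hWVn hrow_succ
end

section
/- Let {V_1, ..., V_n} be the left regular representation of the free semigroup F_n^+ on ℓ²(F_n^+) (V_i e_μ = e_{iμ}), and fix λ in the unit circle. Define W on basis vectors by: W e_μ = e_{(μ_1+1)μ_2···μ_m} if μ_1 ≠ n; W e_μ = e_{1(μ_2+1)μ_3···μ_m} if μ_1 = n, μ_2 ≠ n; ...; W e_{n···n} = λ e_{1···1} (m letters), and W e_∅ = λ e_∅. Then W extends to a unitary operator on ℓ²(F_n^+), and (W, V_1, ..., V_n) satisfies W V_k = V_{k+1} for 1 ≤ k ≤ n−1 and W V_n = V_1 W; i.e., it is an isometric representation of the odometer semigroup with W unitary and {V_i} pure. -/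
/-!
The odometer is a bijection of the set of words, so `e_μ ↦ c_μ e_{μ+1}` with unimodular weights
`c_μ` sends the standard Hilbert basis of `ℓ²(F_n^+)` to another Hilbert basis and hence defines a
unitary. The relations are checked on basis vectors: incrementing `k μ` with `k < n` only changes
the first letter, whereas `n μ` carries to `1 (μ + 1)`, and `n μ` is a full-carry word exactly when
`μ` is. Purity holds because a product of `m` of the shifts `V_i` has range supported on words of
length at least `m`.
-/

open ContinuousLinearMap
open scoped lp

/-- The "add one" odometer map on words over `{1, …, n}` (`0`-indexed): increment the
first letter, carrying to the right; the full-carry word `n ⋯ n` is sent to `1 ⋯ 1`. -/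
def odometerAddOne {n : ℕ} [NeZero n] : List (Fin n) → List (Fin n)
  | [] => []
  | a :: rest =>
      if h : (a : ℕ) + 1 < n then (⟨(a : ℕ) + 1, h⟩ : Fin n) :: rest
      else (0 : Fin n) :: odometerAddOne rest

namespace lp

variable {α β 𝕜 : Type*} [RCLike 𝕜] [DecidableEq α] [DecidableEq β]

theorem ext_single {F : Type*} [AddCommMonoid F] [Module 𝕜 F] [TopologicalSpace F] [T2Space F]
    {A B : ℓ²(α, 𝕜) →L[𝕜] F} (h : ∀ μ, A (lp.single 2 μ 1) = B (lp.single 2 μ 1)) : A = B :=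
  lp.ext_continuousLinearMap ENNReal.ofNat_ne_top fun μ => ContinuousLinearMap.ext_ring (h μ)

section WeightedPermutation

variable {c : α → 𝕜} (σ : α ≃ α)

theorem orthonormal_smul_single_comp (hc : ∀ a, ‖c a‖ = 1) :
    Orthonormal 𝕜 fun μ => (c μ • lp.single 2 (σ μ) 1 : ℓ²(α, 𝕜)) := by
  rw [orthonormal_iff_ite]
  intro μ ν
  rw [inner_smul_left, inner_smul_right, lp.inner_single_left]
  by_cases h : μ = ν
  · subst h
    simp [RCLike.conj_mul, hc]
  · simp [h]

theorem top_le_closure_span_smul_single_comp (hc : ∀ a, c a ≠ 0) :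
    ⊤ ≤ (Submodule.span 𝕜
      (Set.range fun μ => (c μ • lp.single 2 (σ μ) 1 : ℓ²(α, 𝕜)))).topologicalClosure := by
  rw [← (default : HilbertBasis α 𝕜 ℓ²(α, 𝕜)).dense_span]
  refine Submodule.topologicalClosure_mono (Submodule.span_le.2 ?_)
  rintro _ ⟨ν, rfl⟩
  have : (default : HilbertBasis α 𝕜 ℓ²(α, 𝕜)) ν =
      (c (σ.symm ν))⁻¹ • (c (σ.symm ν) • lp.single 2 (σ (σ.symm ν)) 1) := by
    rw [smul_smul, inv_mul_cancel₀ (hc _), one_smul, Equiv.apply_symm_apply,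
      ← HilbertBasis.repr_symm_single]
    rfl -- the default Hilbert basis of `ℓ²` has `repr = refl`
  rw [this]
  exact Submodule.smul_mem _ _ (Submodule.subset_span ⟨_, rfl⟩)

noncomputable def weightedPermutation (hc : ∀ a, ‖c a‖ = 1) : ℓ²(α, 𝕜) ≃ₗᵢ[𝕜] ℓ²(α, 𝕜) :=
  (HilbertBasis.mk (orthonormal_smul_single_comp σ hc)
    (top_le_closure_span_smul_single_comp σ fun a => norm_ne_zero_iff.1 (by simp [hc]))).repr.symm

theorem weightedPermutation_single (hc : ∀ a, ‖c a‖ = 1) (μ : α) :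
    weightedPermutation σ hc (lp.single 2 μ 1) = c μ • lp.single 2 (σ μ) 1 := by
  rw [weightedPermutation, HilbertBasis.repr_symm_single, HilbertBasis.coe_mk]

end WeightedPermutation

variable {s : α → β} {T : ℓ²(α, 𝕜) →L[𝕜] ℓ²(β, 𝕜)}

theorem apply_apply_of_map_single (hs : Function.Injective s)
    (hT : ∀ μ, T (lp.single 2 μ 1) = lp.single 2 (s μ) 1) (f : ℓ²(α, 𝕜)) (μ : α) :
    T f (s μ) = f μ := by
  have : evalCLM 𝕜 _ 2 (s μ) ∘L T = evalCLM 𝕜 _ 2 μ := ext_single fun ν => by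
    by_cases h : ν = μ
    · subst h; simp [evalCLM, hT]
    · simp [evalCLM, hT, h, hs.ne h]
  exact congr($this f)

theorem apply_eq_zero_of_map_single
    (hT : ∀ μ, T (lp.single 2 μ 1) = lp.single 2 (s μ) 1) (f : ℓ²(α, 𝕜)) {ν : β}
    (hν : ν ∉ Set.range s) : T f ν = 0 := by
  have : evalCLM 𝕜 _ 2 ν ∘L T = 0 := ext_single fun μ => by
    have : ν ≠ s μ := fun h => hν ⟨μ, h.symm⟩
    simp [evalCLM, hT, this]
  exact congr($this f)

end lp

namespace Odometer

variable {n : ℕ} [NeZero n]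

def subOne : List (Fin n) → List (Fin n)
  | [] => []
  | a :: rest =>
      if (a : ℕ) = 0 then ⟨n - 1, by have := NeZero.pos n; omega⟩ :: subOne rest
      else ⟨(a : ℕ) - 1, by omega⟩ :: rest

theorem subOne_addOne : ∀ μ : List (Fin n), subOne (odometerAddOne μ) = μ
  | [] => rfl
  | a :: rest => by
    by_cases h : (a : ℕ) + 1 < n
    · simp [odometerAddOne, subOne, h]
    · simp only [odometerAddOne, h, subOne, dite_false, Fin.val_zero, if_true,
        subOne_addOne rest]
      congr
      omega

theorem addOne_subOne : ∀ μ : List (Fin n), odometerAddOne (subOne μ) = μ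
  | [] => rfl
  | a :: rest => by
    by_cases h : (a : ℕ) = 0
    · have := NeZero.pos n
      simp only [subOne, h, if_true, odometerAddOne, addOne_subOne rest]
      rw [dif_neg (by omega)]
      congr
      ext; simp [h]
    · simp only [subOne, h, if_false, odometerAddOne]
      rw [dif_pos (by omega)]
      congr
      omega

def equiv : List (Fin n) ≃ List (Fin n) :=
  ⟨odometerAddOne, subOne, subOne_addOne, addOne_subOne⟩

theorem addOne_cons_of_lt {a : Fin n} (h : (a : ℕ) + 1 < n) (μ : List (Fin n)) :
    odometerAddOne (a :: μ) = ⟨(a : ℕ) + 1, h⟩ :: μ := by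
  rw [odometerAddOne, dif_pos h]

theorem addOne_cons_last (h : n - 1 < n) (μ : List (Fin n)) :
    odometerAddOne (⟨n - 1, h⟩ :: μ) = 0 :: odometerAddOne μ := by
  rw [odometerAddOne, dif_neg (by simp; omega)]

end Odometer

section LeftRegular

variable {ι 𝕜 : Type*} [RCLike 𝕜] [DecidableEq ι]
  {V : ι → ℓ²(List ι, 𝕜) →L[𝕜] ℓ²(List ι, 𝕜)}
  (hV : ∀ i μ, V i (lp.single 2 μ 1) = lp.single 2 (i :: μ) 1)
include hV

theorem prod_map_apply_eq_zero_of_length_lt :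
    ∀ (l : List ι) (f : ℓ²(List ι, 𝕜)) {ν : List ι},
      ν.length < l.length → (l.map V).prod f ν = 0
  | [], _, _, h => absurd h (Nat.not_lt_zero _)
  | i :: l, f, ν, h => by
    rw [List.map_cons, List.prod_cons, mul_apply_eq_comp]
    by_cases hν : ν ∈ Set.range (List.cons i)
    · obtain ⟨τ, rfl⟩ := hν
      rw [lp.apply_apply_of_map_single List.cons_injective (hV i)]
      exact prod_map_apply_eq_zero_of_length_lt l _ (by simpa using h)
    · exact lp.apply_eq_zero_of_map_single (hV i) _ hν

theorem iInf_iSup_range_prod_eq_bot :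
    ⨅ m : ℕ, ⨆ μ : Fin m → ι, LinearMap.range ((List.ofFn μ).map V).prod.toLinearMap = ⊥ := by
  refine eq_bot_iff.2 fun x hx => (Submodule.mem_bot 𝕜).2 (lp.ext (funext fun ν => ?_))
  have hle : ⨆ μ : Fin (ν.length + 1) → ι,
      LinearMap.range ((List.ofFn μ).map V).prod.toLinearMap ≤
        LinearMap.ker (lp.evalCLM 𝕜 _ 2 ν).toLinearMap := by
    refine iSup_le fun μ => ?_
    rintro _ ⟨f, rfl⟩
    exact prod_map_apply_eq_zero_of_length_lt hV _ f (by simp)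
  exact hle ((Submodule.mem_iInf _).1 hx _)

end LeftRegular

/-- On `ℓ²(F_n^+)` with the left regular representation `V_i e_μ = e_{iμ}` and a
unimodular scalar `λ`, the map `e_μ ↦ e_{addOne μ}` (with scalar `λ` on full-carry
words, and `W e_∅ = λ e_∅`) extends to a unitary `W` making `(W, V_1, …, V_n)` an
isometric representation of the odometer semigroup, with `W` unitary and `{V_i}`
pure. (`V ⟨k⟩` plays the role of `V_{k+1}`.) -/
theorem stmt_19 (n : ℕ) [NeZero n] (lam : ℂ) (hlam : ‖lam‖ = 1)
    (V : Fin n → lp (fun _ : List (Fin n) => ℂ) 2 →L[ℂ] lp (fun _ : List (Fin n) => ℂ) 2)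
    (hVe : ∀ (i : Fin n) (μ : List (Fin n)),
      V i (lp.single 2 μ (1 : ℂ)) = lp.single 2 (i :: μ) (1 : ℂ)) :
    ∃ W : lp (fun _ : List (Fin n) => ℂ) 2 →L[ℂ] lp (fun _ : List (Fin n) => ℂ) 2,
      (∀ μ : List (Fin n),
        W (lp.single 2 μ (1 : ℂ)) =
          (if μ.all (fun a => (a : ℕ) = n - 1) then lam else 1) •
            lp.single 2 (odometerAddOne μ) (1 : ℂ)) ∧
      adjoint W ∘L W = 1 ∧ W ∘L adjoint W = 1 ∧
      (∀ k : Fin n, ∀ h : (k : ℕ) + 1 < n, W ∘L V k = V ⟨(k : ℕ) + 1, h⟩) ∧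
      W ∘L V ⟨n - 1, by have := NeZero.ne n; omega⟩ = V 0 ∘L W ∧
      (⨅ m : ℕ, ⨆ μ : Fin m → Fin n,
        LinearMap.range ((List.ofFn μ).map V).prod.toLinearMap) = ⊥ := by
  set c : List (Fin n) → ℂ := fun μ => if μ.all (fun a => (a : ℕ) = n - 1) then lam else 1
  have hc : ∀ μ, ‖c μ‖ = 1 := fun μ => by
    simp only [c]; split_ifs
    exacts [hlam, norm_one]
  let W : ℓ²(List (Fin n), ℂ) →L[ℂ] ℓ²(List (Fin n), ℂ) :=
    lp.weightedPermutation Odometer.equiv hc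
  have hW : ∀ μ, W (lp.single 2 μ 1) = c μ • lp.single 2 (odometerAddOne μ) 1 :=
    lp.weightedPermutation_single Odometer.equiv hc
  refine ⟨W, hW, by ext; simp [W], by ext; simp [W],
    fun k hk => lp.ext_single fun μ => ?_, lp.ext_single fun μ => ?_,
    iInf_iSup_range_prod_eq_bot hVe⟩
  · have : c (k :: μ) = 1 := if_neg (by simp; omega)
    rw [comp_apply, hVe, hW, this, one_smul, hVe, Odometer.addOne_cons_of_lt hk]
  · rw [comp_apply, comp_apply, hVe, hW, hW, show c (_ :: μ) = c μ by simp [c], map_smul, hVe,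
      Odometer.addOne_cons_last]
end
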